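/- Ishikawa–Wakayama formula: for a skew-symmetric 2n × 2n matrix A and a 2k × 2n matrix B with k ≤ n, Pf(B A B^T) = Σ_{U ∈ C([2n], 2k)} det B[·, U] · Pf A[U], where the sum is over all 2k-element subsets U of [2n]. -/

import Mathlib

open Matrix

open Matrix

/-- The Pfaffian of an `n × n` matrix (intended for skew-symmetric matrices),
defined as the signed sum over perfect matchings of the index set: each matching
is encoded by the permutation listing its pairs `(a₁,b₁),(a₂,b₂),…` with
`aᵢ < bᵢ` and `a₁ < a₂ < ⋯`. For odd `n` the Pfaffian is `0`. -/
noncomputable def pfaffian {n : ℕ} {K : Type*} [Field K]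
    (A : Matrix (Fin n) (Fin n) K) : K :=
  if Even n then
    ∑ σ ∈ Finset.univ.filter (fun σ : Equiv.Perm (Fin n) =>
        (∀ i j : Fin n, (i : ℕ) % 2 = 0 → (j : ℕ) = (i : ℕ) + 1 → σ i < σ j) ∧
        (∀ i j : Fin n, (i : ℕ) % 2 = 0 → (j : ℕ) % 2 = 0 → i < j → σ i < σ j)),
      ((Equiv.Perm.sign σ : ℤ) : K) *
        ∏ i : Fin n,
          (if h : (i : ℕ) % 2 = 0 ∧ (i : ℕ) + 1 < n then
            A (σ i) (σ ⟨(i : ℕ) + 1, h.2⟩) else 1)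
  else 0

/-- The Pfaffian of the principal submatrix `A[U]`, read off in the order
induced by the linear order on the index type. -/
noncomputable def pfSub {ι K : Type*} [LinearOrder ι] [Field K]
    (A : Matrix ι ι K) (U : Finset ι) : K :=
  pfaffian (A.submatrix (fun i : Fin U.card => ((U.orderIsoOfFin rfl) i : ι))
    (fun j : Fin U.card => ((U.orderIsoOfFin rfl) j : ι)))

/-!
Write `Pf C = ∑ σ, sign σ * ∏ᵢ C (σ (2i)) (σ (2i+1))`, the sum running over the permutations
that list a perfect matching in sorted order. For skew-symmetric `C` such a term depends only on
the matching `σ s σ⁻¹` (where `s` swaps `2i` and `2i+1`): a permutation commuting with `s` permutes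
the pairs and flips some of them, which changes the sign and the product by the same factor.
Sorting the matching of `g σ` then gives `Pf (C[g, g]) = sign g * Pf C`. When `C` is invariant
under a transposition `(p q)` and `C p q = 0`, sorting the matching of `(p q) σ` is a
sign-reversing involution whose fixed points pair `p` with `q`, so `Pf C = 0`.

By multilinearity, `Pf (B A Bᵀ) = ∑ x, (∏ⱼ B j (x j)) * Pf A[x, x]` over all maps `x : [2k] → [2n]`.
Non-injective `x` contribute `0`. An injective `x` is the increasing enumeration of its image `U`
composed with a permutation `g`, and the sum over `g` is `det B[·, U] * Pf A[U]`.
-/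

open Equiv

section PairedProducts

variable {α : Type*}

lemma Int.cast_units_mul_self {R : Type*} [CommRing R] (u : ℤˣ) : (u : R) * u = 1 := by
  rw [← Int.cast_mul, ← Units.val_mul, Int.units_mul_self, Units.val_one, Int.cast_one]

lemma Equiv.Perm.fin_two_eq_one_or_swap (s : Perm (Fin 2)) : s = 1 ∨ s = swap 0 1 := by
  revert s
  decide

lemma Matrix.apply_perm_fin_two_of_transpose_eq_neg {ι R : Type*} [CommRing R]
    {C : Matrix ι ι R} (hC : Cᵀ = -C) (x : Fin 2 → ι) (s : Perm (Fin 2)) :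
    C (x (s 0)) (x (s 1)) = Perm.sign s * C (x 0) (x 1) := by
  rcases s.fin_two_eq_one_or_swap with rfl | rfl
  · simp
  · simpa [Perm.sign_swap] using congrFun (congrFun hC (x 0)) (x 1)

lemma exists_eq_prodCongrLeft_mul_prodCongrRight_of_commute [Finite α] (h : Perm (α × Fin 2))
    (hh : Commute h (prodCongrRight fun _ => swap 0 1)) :
    ∃ (q : Perm α) (s : α → Perm (Fin 2)), h = prodCongrLeft (fun _ => q) * prodCongrRight s := by
  have key : ∀ a b, h (a, b) = ((h (a, 0)).1, swap 0 (h (a, 0)).2 b) := by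
    refine fun a => Fin.forall_fin_two.mpr ⟨by simp, ?_⟩
    have h1 : h (a, 1) = (prodCongrRight fun _ => swap 0 1) (h (a, 0)) := by
      rw [← Perm.mul_apply, ← hh.eq]
      rfl
    rw [h1]
    obtain ⟨c, d⟩ := h (a, 0)
    fin_cases d <;> rfl
  have hq : Function.Surjective fun a => (h (a, 0)).1 := fun c => by
    refine ⟨(h.symm (c, 0)).1, ?_⟩
    have := congrArg Prod.fst (key (h.symm (c, 0)).1 (h.symm (c, 0)).2)
    rwa [Prod.mk.eta, h.apply_symm_apply, eq_comm] at this
  refine ⟨Equiv.ofBijective _ ⟨Finite.injective_iff_surjective.mpr hq, hq⟩,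
    fun a => swap 0 (h (a, 0)).2, ?_⟩
  ext1 ⟨a, b⟩
  rw [key]
  rfl

lemma sign_mul_prod_apply_of_commute [Fintype α] [DecidableEq α] {ι R : Type*} [CommRing R]
    {C : Matrix ι ι R} (hC : Cᵀ = -C) (φ : α × Fin 2 → ι) (h : Perm (α × Fin 2))
    (hh : Commute h (prodCongrRight fun _ => swap 0 1)) :
    Perm.sign h * ∏ a, C (φ (h (a, 0))) (φ (h (a, 1))) = ∏ a, C (φ (a, 0)) (φ (a, 1)) := by
  obtain ⟨q, s, hqs⟩ := exists_eq_prodCongrLeft_mul_prodCongrRight_of_commute h hh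
  have hterm : ∀ a, C (φ (h (a, 0))) (φ (h (a, 1))) =
      Perm.sign (s a) * C (φ (q a, 0)) (φ (q a, 1)) := fun a => by
    rw [hqs]
    exact C.apply_perm_fin_two_of_transpose_eq_neg hC (fun b => φ (q a, b)) (s a)
  rw [Finset.prod_congr rfl fun a _ => hterm a, Finset.prod_mul_distrib,
    Equiv.prod_comp q fun a => C (φ (a, 0)) (φ (a, 1)), ← mul_assoc, hqs, Perm.sign_mul,
    Perm.sign_prodCongrLeft, Perm.sign_prodCongrRight, Fin.prod_univ_two, Int.units_mul_self,
    one_mul, Units.coe_prod, Int.cast_prod, ← Finset.prod_mul_distrib]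
  simp only [Int.cast_units_mul_self, Finset.prod_const_one, one_mul]

end PairedProducts

lemma Matrix.mul_mul_transpose_apply_eq_sum {m ι R : Type*} [Fintype ι] [CommSemiring R]
    (A : Matrix ι ι R) (B : Matrix m ι R) (r s : m) :
    (B * A * Bᵀ) r s = ∑ y : Fin 2 → ι, B r (y 0) * A (y 0) (y 1) * B s (y 1) := by
  rw [← (finTwoArrowEquiv ι).symm.sum_comp, Fintype.sum_prod_type, Finset.sum_comm]
  simp [Matrix.mul_apply, Finset.sum_mul]

section SortedEnumeration

variable {ι M : Type*} [Fintype ι] [LinearOrder ι] [AddCommMonoid M] {m : ℕ}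

lemma Finset.sum_perm_comp_orderIsoOfFin {U : Finset ι} (hU : U.card = m)
    (f : (Fin m → ι) → M) :
    ∑ g : Perm (Fin m), f (fun j => (U.orderIsoOfFin hU (g j) : ι)) =
      ∑ x ∈ univ.filter Function.Injective with univ.image x = U, f x := by
  let e := U.orderIsoOfFin hU
  refine Finset.sum_nbij (fun g j => (e (g j) : ι)) (fun g _ => ?_) (fun g _ g' _ h => ?_)
    (fun x hx => ?_) (fun _ _ => rfl)
  · refine Finset.mem_filter.mpr ⟨Finset.mem_filter.mpr ⟨Finset.mem_univ _,
      Subtype.val_injective.comp (e.injective.comp g.injective)⟩, Finset.ext fun y => ?_⟩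
    refine ⟨fun hy => ?_, fun hy => ?_⟩
    · obtain ⟨j, -, rfl⟩ := Finset.mem_image.mp hy
      exact (e (g j)).2
    · exact Finset.mem_image.mpr ⟨g.symm (e.symm ⟨y, hy⟩), Finset.mem_univ _, by simp⟩
  · ext1 j
    exact e.injective (Subtype.val_injective (congrFun h j))
  · simp only [Finset.coe_filter, Finset.mem_filter, Finset.mem_univ, true_and,
      Set.mem_ofPred_eq] at hx
    have hmem : ∀ j, x j ∈ U := fun j => hx.2 ▸ Finset.mem_image_of_mem x (Finset.mem_univ j)
    refine ⟨Equiv.ofBijective (fun j => e.symm ⟨x j, hmem j⟩) (Finite.injective_iff_bijective.mp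
      fun a b hab => hx.1 (congrArg Subtype.val (e.symm.injective hab))), Finset.mem_coe.mpr
      (Finset.mem_univ _), funext fun j => ?_⟩
    simp [e]

lemma Finset.sum_injective_eq_sum_card_eq_sum_perm (f : (Fin m → ι) → M) :
    ∑ x ∈ univ.filter Function.Injective, f x =
      ∑ U ∈ (univ.filter fun U : Finset ι => U.card = m).attach,
        ∑ g : Perm (Fin m),
          f fun j => (U.1.orderIsoOfFin (Finset.mem_filter.mp U.2).2 (g j) : ι) := by
  rw [← Finset.sum_fiberwise_of_maps_to (t := univ.filter fun U : Finset ι => U.card = m)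
    (g := fun x => univ.image x) fun x hx => Finset.mem_filter.mpr ⟨Finset.mem_univ _, by
      rw [Finset.card_image_of_injective _ (Finset.mem_filter.mp hx).2, Finset.card_univ,
        Fintype.card_fin]⟩, ← Finset.sum_attach]
  exact Finset.sum_congr rfl fun U _ => (Finset.sum_perm_comp_orderIsoOfFin _ f).symm

end SortedEnumeration

namespace Pfaffian

variable {k : ℕ}

def pairEquiv : Fin k × Fin 2 ≃ Fin (2 * k) :=
  finProdFinEquiv.trans (finCongr (Nat.mul_comm k 2))

@[simp] lemma val_pairEquiv (p : Fin k × Fin 2) : (pairEquiv p : ℕ) = p.2 + 2 * p.1 := by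
  simp [pairEquiv]

def pairSwap : Perm (Fin (2 * k)) :=
  pairEquiv.permCongr (prodCongrRight fun _ => swap 0 1)

@[simp] lemma pairSwap_pairEquiv (i : Fin k) (b : Fin 2) :
    pairSwap (pairEquiv (i, b)) = pairEquiv (i, swap 0 1 b) := by
  simp [pairSwap]

lemma pairSwap_mul_self : (pairSwap : Perm (Fin (2 * k))) * pairSwap = 1 := by
  ext1 j
  obtain ⟨⟨i, b⟩, rfl⟩ := pairEquiv.surjective j
  fin_cases b <;> simp

lemma pairSwap_apply_ne (j : Fin (2 * k)) : pairSwap j ≠ j := by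
  obtain ⟨⟨i, b⟩, rfl⟩ := pairEquiv.surjective j
  fin_cases b <;> simp

def sortedPerms (k : ℕ) : Finset (Perm (Fin (2 * k))) :=
  Finset.univ.filter fun σ => (∀ i, σ (pairEquiv (i, 0)) < σ (pairEquiv (i, 1))) ∧
    StrictMono fun i => σ (pairEquiv (i, 0))

lemma mem_sortedPerms_iff (σ : Perm (Fin (2 * k))) : σ ∈ sortedPerms k ↔
    (∀ i j : Fin (2 * k), (i : ℕ) % 2 = 0 → (j : ℕ) = (i : ℕ) + 1 → σ i < σ j) ∧
      (∀ i j : Fin (2 * k), (i : ℕ) % 2 = 0 → (j : ℕ) % 2 = 0 → i < j → σ i < σ j) := by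
  simp only [pairEquiv.surjective.forall, Prod.forall, Fin.forall_fin_two, val_pairEquiv,
    sortedPerms, Finset.mem_filter, Finset.mem_univ, true_and, Fin.lt_def, StrictMono]
  simp only [Fin.isValue, Fin.coe_ofNat_eq_mod, Nat.zero_mod, zero_add, Nat.mul_mod_right,
    Fin.val_fin_lt, forall_const, Nat.mod_succ, Nat.add_mul_mod_self_left, one_ne_zero,
    IsEmpty.forall_iff, and_self, implies_true, and_true, Order.lt_two_iff, zero_le,
    mul_lt_mul_iff_right₀, add_lt_add_iff_left, and_congr_left_iff]
  refine fun _ => ⟨fun h i i' => ⟨fun _ => by omega, fun h' => ?_⟩, fun h i => (h i i).2 (by omega)⟩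
  obtain rfl : i = i' := Fin.ext (by omega)
  exact h i

def term {K : Type*} [CommRing K] (C : Matrix (Fin (2 * k)) (Fin (2 * k)) K)
    (σ : Perm (Fin (2 * k))) : K :=
  Perm.sign σ * ∏ i, C (σ (pairEquiv (i, 0))) (σ (pairEquiv (i, 1)))

/-- The perfect matching `{τ (2i), τ (2i+1)}`, encoded as a fixed-point-free involution. -/
def matching (τ : Perm (Fin (2 * k))) : Perm (Fin (2 * k)) := τ * pairSwap * τ⁻¹

lemma matching_apply_apply (τ : Perm (Fin (2 * k))) (j : Fin (2 * k)) :
    matching τ (τ j) = τ (pairSwap j) := by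
  simp [matching]

lemma matching_matching (τ : Perm (Fin (2 * k))) (x : Fin (2 * k)) :
    matching τ (matching τ x) = x := by
  rw [← Perm.mul_apply, matching, show τ * pairSwap * τ⁻¹ * (τ * pairSwap * τ⁻¹) =
    τ * (pairSwap * pairSwap) * τ⁻¹ by group, pairSwap_mul_self]
  simp

lemma matching_symm_apply (τ : Perm (Fin (2 * k))) (x : Fin (2 * k)) :
    (matching τ).symm x = matching τ x := by
  rw [symm_apply_eq, matching_matching]

lemma matching_apply_ne (τ : Perm (Fin (2 * k))) (x : Fin (2 * k)) : matching τ x ≠ x := by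
  obtain ⟨j, rfl⟩ := τ.surjective x
  rw [matching_apply_apply, τ.injective.ne_iff]
  exact pairSwap_apply_ne j

lemma matching_mul (g τ : Perm (Fin (2 * k))) : matching (g * τ) = g * matching τ * g⁻¹ := by
  simp only [matching, _root_.mul_inv_rev]
  group

lemma commute_pairSwap_of_matching_eq {τ τ' : Perm (Fin (2 * k))}
    (h : matching τ = matching τ') : Commute (τ⁻¹ * τ') pairSwap := by
  have := congrArg (τ⁻¹ * · * τ') h
  simp only [matching] at this
  simp only [Commute, SemiconjBy]
  convert this.symm using 1 <;> group

lemma matching_apply_eq_of_swap_conj {σ : Perm (Fin (2 * k))} {p q : Fin (2 * k)} (hpq : p ≠ q)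
    (h : swap p q * matching σ * swap p q = matching σ) : matching σ p = q := by
  have hp := congrArg (· p) h
  simp only [Perm.mul_apply, swap_apply_left] at hp
  by_cases hq : matching σ q = p
  · rw [← hq, matching_matching]
  · rw [swap_apply_of_ne_of_ne hq (matching_apply_ne σ q)] at hp
    exact absurd ((matching σ).injective hp) hpq.symm

section Term

variable {K : Type*} [CommRing K] {C : Matrix (Fin (2 * k)) (Fin (2 * k)) K}

lemma term_mul_of_commute (hC : Cᵀ = -C) (τ h : Perm (Fin (2 * k)))
    (hh : Commute h pairSwap) : term C (τ * h) = term C τ := by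
  obtain ⟨h', rfl⟩ := pairEquiv.permCongr.surjective h
  have hh' := hh.map pairEquiv.symm.permCongrHom
  simp only [permCongrHom_coe, pairSwap, ← permCongr_symm, symm_apply_apply] at hh'
  have key := sign_mul_prod_apply_of_commute hC (τ ∘ pairEquiv) h' hh'
  simp only [Function.comp_apply] at key
  simp only [term, Perm.sign_mul, Perm.sign_permCongr, Units.val_mul, Int.cast_mul, mul_assoc,
    Perm.mul_apply, permCongr_apply, symm_apply_apply, ← key]

lemma term_eq_of_matching_eq (hC : Cᵀ = -C) {τ τ' : Perm (Fin (2 * k))}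
    (h : matching τ = matching τ') : term C τ = term C τ' := by
  rw [← term_mul_of_commute hC τ _ (commute_pairSwap_of_matching_eq h), mul_inv_cancel_left]

lemma term_submatrix (C : Matrix (Fin (2 * k)) (Fin (2 * k)) K) (g σ : Perm (Fin (2 * k))) :
    term (C.submatrix g g) σ = Perm.sign g * term C (g * σ) := by
  simp only [term, Perm.sign_mul, Units.val_mul, Int.cast_mul, Matrix.submatrix_apply,
    Perm.mul_apply, ← mul_assoc, Int.cast_units_mul_self, one_mul]

lemma term_eq_zero_of_matching_apply (hC : Cᵀ = -C) {σ : Perm (Fin (2 * k))} {p q : Fin (2 * k)}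
    (h : matching σ p = q) (h0 : C p q = 0) : term C σ = 0 := by
  obtain ⟨j, rfl⟩ := σ.surjective p
  obtain ⟨⟨i, b⟩, rfl⟩ := pairEquiv.surjective j
  rw [matching_apply_apply, pairSwap_pairEquiv] at h
  refine mul_eq_zero_of_right _ (Finset.prod_eq_zero (Finset.mem_univ i) ?_)
  obtain rfl | rfl : b = 0 ∨ b = 1 := by fin_cases b <;> simp
  · rw [swap_apply_left] at h
    rwa [h]
  · rw [swap_apply_right] at h
    rw [h, ← Matrix.transpose_apply C, hC, Matrix.neg_apply, h0, neg_zero]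

lemma term_mul_mul_transpose {ι : Type*} [Fintype ι] (A : Matrix ι ι K)
    (B : Matrix (Fin (2 * k)) ι K) (σ : Perm (Fin (2 * k))) :
    term (B * A * Bᵀ) σ = ∑ x : Fin (2 * k) → ι, (∏ j, B j (x j)) * term (A.submatrix x x) σ := by
  let φ := pairEquiv.trans σ
  let E : (Fin k → Fin 2 → ι) ≃ (Fin (2 * k) → ι) :=
    (Equiv.curry _ _ _).symm.trans (φ.arrowCongr (Equiv.refl ι))
  have hE : ∀ Y i b, E Y (σ (pairEquiv (i, b))) = Y i b := fun Y i b => by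
    simp [E, φ, Equiv.arrowCongr_apply]
  simp only [term, Matrix.mul_mul_transpose_apply_eq_sum, Fintype.prod_sum, Finset.mul_sum]
  rw [← E.sum_comp]
  refine Fintype.sum_congr _ _ fun Y => ?_
  have hB : ∏ j, B j (E Y j) =
      ∏ i, B (σ (pairEquiv (i, 0))) (Y i 0) * B (σ (pairEquiv (i, 1))) (Y i 1) := by
    rw [← φ.prod_comp, Fintype.prod_prod_type]
    simp [φ, Fin.prod_univ_two, hE]
  simp only [Matrix.submatrix_apply, hE, hB, mul_left_comm _ (Perm.sign σ : K),
    ← Finset.prod_mul_distrib]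
  congr 1
  refine Finset.prod_congr rfl fun i _ => ?_
  ring

end Term

def lowSet (τ : Perm (Fin (2 * k))) : Finset (Fin (2 * k)) :=
  Finset.univ.filter fun x => x < matching τ x

lemma card_lowSet (τ : Perm (Fin (2 * k))) : (lowSet τ).card = k := by
  have hhigh : (Finset.univ.filter fun x => ¬ x < matching τ x) =
      (lowSet τ).map (matching τ).toEmbedding := by
    ext x
    simp only [lowSet, Finset.mem_filter, Finset.mem_univ, true_and, Finset.mem_map_equiv,
      matching_symm_apply, matching_matching, not_lt]
    exact ⟨fun h => h.lt_of_ne (matching_apply_ne τ x), le_of_lt⟩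
  have := Finset.card_filter_add_card_filter_not (s := Finset.univ) (fun x => x < matching τ x)
  rw [hhigh, Finset.card_map, Finset.card_univ, Fintype.card_fin] at this
  change (lowSet τ).card + (lowSet τ).card = 2 * k at this
  omega

def low (τ : Perm (Fin (2 * k))) : Fin k ↪o Fin (2 * k) :=
  (lowSet τ).orderEmbOfFin (card_lowSet τ)

lemma low_lt_matching_low (τ : Perm (Fin (2 * k))) (i : Fin k) :
    low τ i < matching τ (low τ i) :=
  (Finset.mem_filter.mp (Finset.orderEmbOfFin_mem (lowSet τ) (card_lowSet τ) i)).2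

lemma low_ne_matching_low (τ : Perm (Fin (2 * k))) (i i' : Fin k) :
    low τ i ≠ matching τ (low τ i') := by
  intro h
  have h' := low_lt_matching_low τ i
  rw [h, matching_matching] at h'
  exact (low_lt_matching_low τ i').not_gt h'

def lowPair (τ : Perm (Fin (2 * k))) (p : Fin k × Fin 2) : Fin (2 * k) :=
  ![low τ p.1, matching τ (low τ p.1)] p.2

lemma lowPair_injective (τ : Perm (Fin (2 * k))) : Function.Injective (lowPair τ) := by
  rintro ⟨i, b⟩ ⟨i', b'⟩ h
  fin_cases b <;> fin_cases b' <;>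
    simp only [lowPair, Fin.zero_eta, Fin.mk_one, Fin.isValue, cons_val_zero, cons_val_one,
      cons_val_fin_one, EmbeddingLike.apply_eq_iff_eq] at h
  · rw [h]
  · exact absurd h (low_ne_matching_low τ i i')
  · exact absurd h.symm (low_ne_matching_low τ i' i)
  · rw [h]

/-- The representative of the matching of `τ` in `sortedPerms k`. -/
noncomputable def normalize (τ : Perm (Fin (2 * k))) : Perm (Fin (2 * k)) :=
  pairEquiv.symm.trans <| Equiv.ofBijective (lowPair τ) <|
    (Fintype.bijective_iff_injective_and_card _).mpr ⟨lowPair_injective τ, by simp [mul_comm]⟩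

@[simp] lemma normalize_pairEquiv_zero (τ : Perm (Fin (2 * k))) (i : Fin k) :
    normalize τ (pairEquiv (i, 0)) = low τ i := by
  simp [normalize, lowPair]

@[simp] lemma normalize_pairEquiv_one (τ : Perm (Fin (2 * k))) (i : Fin k) :
    normalize τ (pairEquiv (i, 1)) = matching τ (low τ i) := by
  simp [normalize, lowPair]

lemma normalize_mem_sortedPerms (τ : Perm (Fin (2 * k))) : normalize τ ∈ sortedPerms k := by
  simp [sortedPerms, low_lt_matching_low, (low τ).strictMono]

lemma matching_normalize (τ : Perm (Fin (2 * k))) : matching (normalize τ) = matching τ := by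
  ext1 x
  obtain ⟨j, rfl⟩ := (normalize τ).surjective x
  obtain ⟨⟨i, b⟩, rfl⟩ := pairEquiv.surjective j
  rw [matching_apply_apply, pairSwap_pairEquiv]
  fin_cases b <;> simp [matching_matching]

lemma eq_normalize_of_matching_eq {σ τ : Perm (Fin (2 * k))} (hσ : σ ∈ sortedPerms k)
    (h : matching σ = matching τ) : σ = normalize τ := by
  simp only [sortedPerms, Finset.mem_filter, Finset.mem_univ, true_and] at hσ
  have hpair : ∀ i, σ (pairEquiv (i, 1)) = matching τ (σ (pairEquiv (i, 0))) := fun i => by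
    rw [← h, matching_apply_apply, pairSwap_pairEquiv]
    rfl
  have hlow : (fun i => σ (pairEquiv (i, 0))) = low τ :=
    Finset.orderEmbOfFin_unique (card_lowSet τ)
      (fun i => Finset.mem_filter.mpr ⟨Finset.mem_univ _, hpair i ▸ hσ.1 i⟩) hσ.2
  ext1 x
  obtain ⟨⟨i, b⟩, rfl⟩ := pairEquiv.surjective x
  fin_cases b
  · simp [← hlow]
  · simp [hpair, ← hlow]

lemma normalize_eq_normalize {τ τ' : Perm (Fin (2 * k))} (h : matching τ = matching τ') :
    normalize τ = normalize τ' :=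
  eq_normalize_of_matching_eq (normalize_mem_sortedPerms τ) ((matching_normalize τ).trans h)

lemma normalize_of_mem {σ : Perm (Fin (2 * k))} (hσ : σ ∈ sortedPerms k) : normalize σ = σ :=
  (eq_normalize_of_matching_eq hσ rfl).symm

lemma normalize_inv_mul_normalize_mul (g : Perm (Fin (2 * k))) {σ : Perm (Fin (2 * k))}
    (hσ : σ ∈ sortedPerms k) : normalize (g⁻¹ * normalize (g * σ)) = σ := by
  have h : matching (g⁻¹ * normalize (g * σ)) = matching σ := by
    rw [matching_mul, matching_normalize, matching_mul]
    group
  rw [normalize_eq_normalize h, normalize_of_mem hσ]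

lemma sum_normalize_mul {M : Type*} [AddCommMonoid M] (g : Perm (Fin (2 * k)))
    (f : Perm (Fin (2 * k)) → M) :
    ∑ σ ∈ sortedPerms k, f (normalize (g * σ)) = ∑ σ ∈ sortedPerms k, f σ :=
  Finset.sum_nbij' (fun σ => normalize (g * σ)) (fun σ => normalize (g⁻¹ * σ))
    (fun _ _ => normalize_mem_sortedPerms _) (fun _ _ => normalize_mem_sortedPerms _)
    (fun _ hσ => normalize_inv_mul_normalize_mul g hσ)
    (fun σ hσ => by simpa using normalize_inv_mul_normalize_mul g⁻¹ hσ) (fun _ _ => rfl)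

end Pfaffian

open Pfaffian

section PfaffianLemmas

variable {K : Type*} [Field K] {k : ℕ} {C : Matrix (Fin (2 * k)) (Fin (2 * k)) K}

lemma pfaffian_eq_sum_term (C : Matrix (Fin (2 * k)) (Fin (2 * k)) K) :
    pfaffian C = ∑ σ ∈ sortedPerms k, term C σ := by
  rw [pfaffian, if_pos (even_two_mul k)]
  refine Finset.sum_congr (Finset.ext fun σ => by simp [mem_sortedPerms_iff]) fun σ _ => ?_
  rw [term, ← pairEquiv.prod_comp, Fintype.prod_prod_type]
  refine congrArg _ (Finset.prod_congr rfl fun i _ => ?_)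
  have hsucc : (⟨pairEquiv (i, 0) + 1, by simp; omega⟩ : Fin (2 * k)) = pairEquiv (i, 1) := by
    ext
    simp
    omega
  rw [Fin.prod_univ_two, dif_pos ⟨by simp, by simp; omega⟩, dif_neg (by simp), mul_one, hsucc]

theorem pfaffian_submatrix_perm (hC : Cᵀ = -C) (g : Perm (Fin (2 * k))) :
    pfaffian (C.submatrix g g) = Perm.sign g * pfaffian C := by
  rw [pfaffian_eq_sum_term, pfaffian_eq_sum_term, ← sum_normalize_mul g (term C), Finset.mul_sum]
  refine Finset.sum_congr rfl fun σ _ => ?_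
  rw [term_submatrix, term_eq_of_matching_eq hC (matching_normalize _).symm]

theorem pfaffian_eq_zero_of_submatrix_swap (hC : Cᵀ = -C) {p q : Fin (2 * k)} (hpq : p ≠ q)
    (hswap : C.submatrix (swap p q) (swap p q) = C) (h0 : C p q = 0) : pfaffian C = 0 := by
  rw [pfaffian_eq_sum_term]
  refine Finset.sum_involution (fun σ _ => normalize (swap p q * σ)) (fun σ _ => ?_)
    (fun σ _ hσ hfix => hσ ?_) (fun _ _ => normalize_mem_sortedPerms _)
    (fun σ hσ => by simpa using normalize_inv_mul_normalize_mul (swap p q) hσ)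
  · have hterm : term C σ = Perm.sign (swap p q) * term C (swap p q * σ) := by
      rw [← term_submatrix, hswap]
    rw [hterm, term_eq_of_matching_eq hC (matching_normalize _), Perm.sign_swap hpq]
    simp
  · refine term_eq_zero_of_matching_apply hC (matching_apply_eq_of_swap_conj hpq ?_) h0
    conv_rhs => rw [← hfix, matching_normalize, matching_mul]
    simp

end PfaffianLemmas

section Expansion

variable {K : Type*} [Field K] {k : ℕ} {ι : Type*}

theorem pfaffian_mul_mul_transpose [Fintype ι] (A : Matrix ι ι K) (B : Matrix (Fin (2 * k)) ι K) :
    pfaffian (B * A * Bᵀ) =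
      ∑ x : Fin (2 * k) → ι, (∏ j, B j (x j)) * pfaffian (A.submatrix x x) := by
  simp only [pfaffian_eq_sum_term, term_mul_mul_transpose, Finset.mul_sum]
  exact Finset.sum_comm

theorem pfaffian_submatrix_eq_zero_of_not_injective {A : Matrix ι ι K} (hA : Aᵀ = -A)
    (hAd : ∀ i, A i i = 0) {x : Fin (2 * k) → ι} (hx : ¬ Function.Injective x) :
    pfaffian (A.submatrix x x) = 0 := by
  obtain ⟨p, q, hxpq, hpq⟩ := Function.not_injective_iff.mp hx
  have hswap : x ∘ swap p q = x := by
    rw [comp_swap_eq_update, hxpq, Function.update_eq_self, ← hxpq, Function.update_eq_self]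
  refine pfaffian_eq_zero_of_submatrix_swap (by rw [Matrix.transpose_submatrix, hA]; rfl) hpq ?_
    (by simp [hxpq, hAd])
  rw [Matrix.submatrix_submatrix, hswap]

lemma pfSub_eq_pfaffian_submatrix [LinearOrder ι] (A : Matrix ι ι K) {U : Finset ι} {m : ℕ}
    (hU : U.card = m) :
    pfSub A U = pfaffian (A.submatrix (fun i => (U.orderIsoOfFin hU i : ι))
      (fun i => (U.orderIsoOfFin hU i : ι))) := by
  subst hU
  rfl

lemma sum_perm_mul_pfaffian_eq_det_mul_pfSub [Fintype ι] [LinearOrder ι] {A : Matrix ι ι K}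
    (hA : Aᵀ = -A) (B : Matrix (Fin (2 * k)) ι K) {U : Finset ι} (hU : U.card = 2 * k) :
    ∑ g : Perm (Fin (2 * k)), (∏ j, B j (U.orderIsoOfFin hU (g j))) *
        pfaffian (A.submatrix (fun j => (U.orderIsoOfFin hU (g j) : ι))
          (fun j => (U.orderIsoOfFin hU (g j) : ι))) =
      (B.submatrix id fun j => (U.orderIsoOfFin hU j : ι)).det * pfSub A U := by
  rw [← Matrix.det_transpose, Matrix.det_apply', Finset.sum_mul,
    pfSub_eq_pfaffian_submatrix A hU]
  refine Finset.sum_congr rfl fun g _ => ?_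
  have hsub : A.submatrix (fun j => (U.orderIsoOfFin hU (g j) : ι))
      (fun j => (U.orderIsoOfFin hU (g j) : ι)) =
      (A.submatrix (fun j => (U.orderIsoOfFin hU j : ι))
        (fun j => (U.orderIsoOfFin hU j : ι))).submatrix g g := rfl
  rw [hsub, pfaffian_submatrix_perm (by rw [Matrix.transpose_submatrix, hA]; rfl)]
  simp only [Matrix.transpose_apply, Matrix.submatrix_apply, id]
  ring

end Expansion

theorem ishikawa_wakayama_general {n k : ℕ} {K : Type*} [Field K]
    (A : Matrix (Fin (2 * n)) (Fin (2 * n)) K)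
    (hA : Aᵀ = -A) (hAd : ∀ i, A i i = 0)
    (B : Matrix (Fin (2 * k)) (Fin (2 * n)) K) :
    pfaffian (B * A * Bᵀ) =
      ∑ U ∈ (Finset.univ.filter
          (fun U : Finset (Fin (2 * n)) => U.card = 2 * k)).attach,
        (B.submatrix id (fun j : Fin (2 * k) =>
          ((U.1.orderIsoOfFin ((Finset.mem_filter.mp U.2).2)) j : Fin (2 * n)))).det *
          pfSub A U.1 := by
  rw [pfaffian_mul_mul_transpose,
    ← Finset.sum_filter_of_ne (p := Function.Injective) fun x _ hx => ?_,
    Finset.sum_injective_eq_sum_card_eq_sum_perm]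
  · exact Finset.sum_congr rfl fun U _ => sum_perm_mul_pfaffian_eq_det_mul_pfSub hA B _
  · by_contra hinj
    rw [pfaffian_submatrix_eq_zero_of_not_injective hA hAd hinj, mul_zero] at hx
    exact hx rfl

/-- Ishikawa–Wakayama formula: for a skew-symmetric `2n × 2n` matrix `A` and a
`2k × 2n` matrix `B` with `k ≤ n`,
`Pf (B A Bᵀ) = Σ_{U ⊆ [2n], |U| = 2k} det B[·, U] · Pf A[U]`. -/
theorem ishikawa_wakayama {n k : ℕ} (hk : k ≤ n) {K : Type*} [Field K]
    (A : Matrix (Fin (2 * n)) (Fin (2 * n)) K)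
    (hA : Aᵀ = -A) (hAd : ∀ i, A i i = 0)
    (B : Matrix (Fin (2 * k)) (Fin (2 * n)) K) :
    pfaffian (B * A * Bᵀ) =
      ∑ U ∈ (Finset.univ.filter
          (fun U : Finset (Fin (2 * n)) => U.card = 2 * k)).attach,
        (B.submatrix id (fun j : Fin (2 * k) =>
          ((U.1.orderIsoOfFin ((Finset.mem_filter.mp U.2).2)) j : Fin (2 * n)))).det *
          pfSub A U.1 :=
  ishikawa_wakayama_general A hA hAd B
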